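/- (Weight-zero case of the paper's Corollary on compatibility of the p-saturated filtration with the Witt-vector operations.) For all integers r ≥ 0 and n ≥ 1: V(Fil^p_r Wₙ(L)) ⊆ Fil^p_r W_{n+1}(L); F(Fil^p_r W_{n+1}(L)) ⊆ Fil^p_r Wₙ(L); R(Fil^p_r W_{n+1}(L)) ⊆ Fil^p_r Wₙ(L); p̲(Fil^p_r Wₙ(L)) ⊆ Fil^p_r W_{n+1}(L); and moreover p̲(Fil^p_r Wₙ(L)) = p·Fil^p_{pr} W_{n+1}(L). -/

import Mathlib

noncomputable section

open scoped Classical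

/-- A discretely valued field: a field `L` together with a normalized additive valuation
`v : L → ℤ ∪ {∞}` and a uniformizer `z` (so `v z = 1`).  The valuation ring is
`O = {a : L | 0 ≤ v a}`, with maximal ideal `𝔪 = {a : L | 1 ≤ v a}`. -/
structure DVField (L : Type) [Field L] : Type where
  v : L → WithTop ℤ
  z : L
  v_top : ∀ a : L, v a = ⊤ ↔ a = 0
  v_mul : ∀ a b : L, v (a * b) = v a + v b
  v_add : ∀ a b : L, min (v a) (v b) ≤ v (a + b)
  v_z : v z = 1

namespace DVField

variable {L : Type} [Field L]

/-- `Wₙ(O) ⊆ Wₙ(L)`: the truncated Witt vectors all of whose components are integral. -/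
def WO (D : DVField L) (p n : ℕ) : Set (TruncatedWittVector p n L) :=
  {x | ∀ i : Fin n, 0 ≤ D.v (x.coeff i)}

/-- The Brylinski–Kato filtration
`fil^log_r Wₙ(L) = {(a₀, …, a_{n-1}) | p^{n-1-i} · v(aᵢ) ≥ -r for all i}`. -/
def filLog (D : DVField L) (p r n : ℕ) : Set (TruncatedWittVector p n L) :=
  {x | ∀ i : Fin n, (↑(-(r : ℤ)) : WithTop ℤ) ≤ p ^ (n - 1 - (i : ℕ)) • D.v (x.coeff i)}

end DVField

/-- The Verschiebung `V : Wₙ(L) → W_{n+1}(L)`, shifting components. -/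
def wV {p : ℕ} {L : Type} [Field L] {n : ℕ} (x : TruncatedWittVector p n L) :
    TruncatedWittVector p (n + 1) L :=
  TruncatedWittVector.mk p fun i =>
    if h : (i : ℕ) = 0 then 0 else x.coeff ⟨(i : ℕ) - 1, by have := i.isLt; omega⟩

/-- The iterated Verschiebung `V^{n-m} : W_m(L) → Wₙ(L)` (for `m ≤ n`), given by shifting
components by `n - m`. -/
def wVit {p : ℕ} {L : Type} [Field L] {m n : ℕ} (x : TruncatedWittVector p m L) :
    TruncatedWittVector p n L :=
  TruncatedWittVector.mk p fun i =>
    if h : n - m ≤ (i : ℕ) ∧ (i : ℕ) - (n - m) < m then x.coeff ⟨(i : ℕ) - (n - m), h.2⟩ else 0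

/-- The restriction `R : W_{n+1}(L) → Wₙ(L)`, dropping the last component. -/
def wR {p : ℕ} {L : Type} [Field L] {n : ℕ} (x : TruncatedWittVector p (n + 1) L) :
    TruncatedWittVector p n L :=
  TruncatedWittVector.mk p fun i => x.coeff i.castSucc

/-- The iterated restriction `R^{m-n} : W_m(L) → Wₙ(L)` (for `n ≤ m`), keeping the first `n`
components. -/
def wRes {p : ℕ} {L : Type} [Field L] {m n : ℕ} (x : TruncatedWittVector p m L) :
    TruncatedWittVector p n L :=
  TruncatedWittVector.mk p fun i => if h : (i : ℕ) < m then x.coeff ⟨(i : ℕ), h⟩ else 0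

/-- The Frobenius `F : W_{n+1}(L) → Wₙ(L)` in characteristic `p`:
componentwise `p`-th power followed by restriction. -/
def wF {p : ℕ} {L : Type} [Field L] {n : ℕ} (x : TruncatedWittVector p (n + 1) L) :
    TruncatedWittVector p n L :=
  TruncatedWittVector.mk p fun i => x.coeff i.castSucc ^ p

/-- The Teichmüller lift `[a] = (a, 0, …, 0)`. -/
def wT (p : ℕ) {L : Type} [Field L] (n : ℕ) (a : L) : TruncatedWittVector p n L :=
  TruncatedWittVector.mk p fun i => if (i : ℕ) = 0 then a else 0

/-- The map `p̲ : Wₙ(L) → W_{n+1}(L)`: lift to length `n+1` (by appending a zero component)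
and multiply by `p`. -/
def wP {p : ℕ} [Fact p.Prime] {L : Type} [Field L] {n : ℕ} (x : TruncatedWittVector p n L) :
    TruncatedWittVector p (n + 1) L :=
  p • (wRes x : TruncatedWittVector p (n + 1) L)

namespace DVField

variable {L : Type} [Field L]

/-- The Kato–Matsuda filtration
`fil_r Wₙ(L) = fil^log_{r-1} Wₙ(L) + V^{n-m}(fil^log_r W_m(L))` where `m = min(v_p(r), n)`,
and `fil_0 Wₙ(L) = Wₙ(O)`. -/
def filKM (D : DVField L) (p : ℕ) [Fact p.Prime] (r n : ℕ) :
    Set (TruncatedWittVector p n L) :=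
  if r = 0 then D.WO p n
  else {x | ∃ a ∈ D.filLog p (r - 1) n,
    ∃ b ∈ D.filLog p r (min (padicValNat p r) n), x = a + wVit b}

/-- The `p`-saturation `Fil^p_r Wₙ(L) = Σ_{s=0}^{n-1} p^s · fil_{r·p^s} Wₙ(L)`. -/
def FilP (D : DVField L) (p : ℕ) [Fact p.Prime] (r n : ℕ) :
    Set (TruncatedWittVector p n L) :=
  {x | ∃ f : Fin n → TruncatedWittVector p n L,
      (∀ s : Fin n, f s ∈ D.filKM p (r * p ^ (s : ℕ)) n) ∧
      x = ∑ s : Fin n, p ^ (s : ℕ) • f s}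

end DVField


/-!
In characteristic `p` we have `V ∘ F = p` on Witt vectors, so `p̲ = V ∘ φ` where `φ` raises every
component to the `p`-th power; hence `p • y` only depends on `R y`, and `p ^ n` kills `Wₙ(L)`.
Since `V^{n-m}(fil^log_r W_m(L))` is the part of `fil^log_r Wₙ(L)` whose first `n - v_p(r)`
components vanish, `fil_r Wₙ(L)` is a sum of two sets cut out by the componentwise conditions
`p^{n-1-i} v(aᵢ) ≥ -r`. The additive maps `V`, `R`, `φ` only move and raise components, so they
act on these conditions directly: `V` preserves `fil_r`, `φ` sends `fil_r` to `fil_{pr}`, and `R`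
sends `fil_{pr} W_{n+1}(L)` to `fil_r Wₙ(L)`; conversely every element of `fil_r Wₙ(L)` lifts along
`R` to `fil_{pr} W_{n+1}(L)`. Summing with weights `p^s` gives the statements for `Fil^p`, using
`F = R ∘ φ`, `p̲ x = p • w` for any lift `w ∈ Fil^p_{pr} W_{n+1}(L)` of `x`, and `p • w = p̲ (R w)`.
-/

open Set TruncatedWittVector

section WittAlgebra

variable {p : ℕ} {L : Type} [Field L] {n : ℕ}

def wFrob (x : TruncatedWittVector p n L) : TruncatedWittVector p n L :=
  TruncatedWittVector.mk p fun i => x.coeff i ^ p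

theorem coeff_wV (x : TruncatedWittVector p n L) (i : Fin (n + 1)) :
    (wV x).coeff i = if h : (i : ℕ) = 0 then 0 else x.coeff ⟨i - 1, by omega⟩ :=
  coeff_mk _ _

theorem coeff_wVit {m : ℕ} (x : TruncatedWittVector p m L) (i : Fin n) :
    (wVit x).coeff i =
      if h : n - m ≤ (i : ℕ) ∧ (i : ℕ) - (n - m) < m then x.coeff ⟨i - (n - m), h.2⟩ else 0 :=
  coeff_mk _ _

theorem coeff_wR (x : TruncatedWittVector p (n + 1) L) (i : Fin n) :
    (wR x).coeff i = x.coeff i.castSucc :=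
  coeff_mk _ _

theorem coeff_wRes {m : ℕ} (x : TruncatedWittVector p m L) (i : Fin n) :
    (wRes x).coeff i = if h : (i : ℕ) < m then x.coeff ⟨i, h⟩ else 0 :=
  coeff_mk _ _

theorem coeff_wFrob (x : TruncatedWittVector p n L) (i : Fin n) :
    (wFrob x).coeff i = x.coeff i ^ p :=
  coeff_mk _ _

theorem wR_wRes (x : TruncatedWittVector p n L) :
    wR (wRes x : TruncatedWittVector p (n + 1) L) = x :=
  TruncatedWittVector.ext fun i => by simp [coeff_wR, coeff_wRes]

variable [Fact p.Prime]

theorem wV_truncate (a : WittVector p L) :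
    wV (WittVector.truncate n a) = WittVector.truncate (n + 1) (WittVector.verschiebung a) := by
  refine TruncatedWittVector.ext fun i => ?_
  rw [coeff_wV, WittVector.coeff_truncate]
  obtain ⟨_ | i, hi⟩ := i
  · simp
  · simp [WittVector.coeff_truncate]

theorem wR_truncate (a : WittVector p L) :
    wR (WittVector.truncate (n + 1) a) = WittVector.truncate n a :=
  TruncatedWittVector.ext fun i => by simp [coeff_wR, WittVector.coeff_truncate]

theorem wFrob_truncate [CharP L p] (a : WittVector p L) :
    wFrob (WittVector.truncate n a) = WittVector.truncate n (WittVector.frobenius a) :=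
  TruncatedWittVector.ext fun i => by
    simp [coeff_wFrob, WittVector.coeff_truncate, WittVector.coeff_frobenius_charP]

def addMonoidHomOfTruncate {n' : ℕ} (f : TruncatedWittVector p n L → TruncatedWittVector p n' L)
    (g : WittVector p L →+ WittVector p L)
    (hf : ∀ a, f (WittVector.truncate n a) = WittVector.truncate n' (g a)) :
    TruncatedWittVector p n L →+ TruncatedWittVector p n' L where
  toFun := f
  map_zero' := by rw [← map_zero (WittVector.truncate n), hf, map_zero, map_zero]
  map_add' x y := by
    obtain ⟨a, rfl⟩ := WittVector.truncate_surjective p n L x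
    obtain ⟨b, rfl⟩ := WittVector.truncate_surjective p n L y
    simp only [← map_add, hf]

def wVHom : TruncatedWittVector p n L →+ TruncatedWittVector p (n + 1) L :=
  addMonoidHomOfTruncate wV WittVector.verschiebung wV_truncate

def wRHom : TruncatedWittVector p (n + 1) L →+ TruncatedWittVector p n L :=
  addMonoidHomOfTruncate wR (AddMonoidHom.id _) wR_truncate

theorem wRHom_apply (x : TruncatedWittVector p (n + 1) L) : wRHom x = wR x := rfl

variable [CharP L p]

def wFrobHom : TruncatedWittVector p n L →+ TruncatedWittVector p n L :=
  addMonoidHomOfTruncate wFrob WittVector.frobenius.toAddMonoidHom wFrob_truncate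

theorem p_nsmul_eq_wV_wFrob_wR (y : TruncatedWittVector p (n + 1) L) :
    p • y = wV (wFrob (wR y)) := by
  obtain ⟨a, rfl⟩ := WittVector.truncate_surjective p (n + 1) L y
  rw [wR_truncate, wFrob_truncate, wV_truncate, WittVector.verschiebung_frobenius, ← map_nsmul,
    nsmul_eq_mul, mul_comm]

theorem wP_eq_wV_wFrob (x : TruncatedWittVector p n L) : wP x = wV (wFrob x) := by
  rw [wP, p_nsmul_eq_wV_wFrob_wR, wR_wRes]

theorem wP_eq_nsmul_of_wR_eq {x : TruncatedWittVector p n L} {w : TruncatedWittVector p (n + 1) L}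
    (h : wR w = x) : wP x = p • w := by
  rw [wP_eq_wV_wFrob, p_nsmul_eq_wV_wFrob_wR, h]

theorem pow_nsmul_eq_zero {s : ℕ} (hs : n ≤ s) (x : TruncatedWittVector p n L) :
    p ^ s • x = 0 := by
  obtain ⟨a, rfl⟩ := WittVector.truncate_surjective p n L x
  refine TruncatedWittVector.ext fun i => ?_
  rw [← map_nsmul, nsmul_eq_mul, mul_comm, WittVector.coeff_truncate, Nat.cast_pow,
    WittVector.mul_pow_charP_coeff_zero _ (by omega), coeff_zero]

theorem sum_range_pow_nsmul_eq {N : ℕ} (hN : n ≤ N) (f : ℕ → TruncatedWittVector p n L) :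
    ∑ s ∈ Finset.range N, p ^ s • f s = ∑ s ∈ Finset.range n, p ^ s • f s :=
  (Finset.sum_subset (Finset.range_subset_range.2 hN) fun _ _ hs =>
    pow_nsmul_eq_zero (by simpa using hs) _).symm

end WittAlgebra

section VanishingBelow

variable {p : ℕ} {L : Type} [Field L] {n : ℕ}

def vanishingBelow (k n : ℕ) : Set (TruncatedWittVector p n L) :=
  {x | ∀ i : Fin n, (i : ℕ) < k → x.coeff i = 0}

theorem vanishingBelow_anti {k k' : ℕ} (h : k' ≤ k) :
    (vanishingBelow k n : Set (TruncatedWittVector p n L)) ⊆ vanishingBelow k' n :=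
  fun _ hx i hi => hx i (hi.trans_le h)

theorem mapsTo_wV_vanishingBelow (k : ℕ) :
    MapsTo (wV : TruncatedWittVector p n L → _) (vanishingBelow k n)
      (vanishingBelow (k + 1) (n + 1)) := by
  intro x hx i hi
  rw [coeff_wV]
  split_ifs with h
  · rfl
  · exact hx _ (by simp only; omega)

theorem mapsTo_wR_vanishingBelow (k : ℕ) :
    MapsTo (wR : TruncatedWittVector p (n + 1) L → _) (vanishingBelow k (n + 1))
      (vanishingBelow k n) :=
  fun _ hx _ hi => hx _ hi

theorem mapsTo_wRes_vanishingBelow (k : ℕ) :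
    MapsTo (wRes : TruncatedWittVector p n L → TruncatedWittVector p (n + 1) L)
      (vanishingBelow k n) (vanishingBelow k (n + 1)) := by
  intro x hx i hi
  rw [coeff_wRes]
  split_ifs with h
  · exact hx _ hi
  · rfl

theorem mapsTo_wFrob_vanishingBelow [Fact p.Prime] (k : ℕ) :
    MapsTo (wFrob : TruncatedWittVector p n L → _) (vanishingBelow k n) (vanishingBelow k n) := by
  intro x hx i hi
  rw [coeff_wFrob, hx i hi, zero_pow (Fact.out : p.Prime).ne_zero]

end VanishingBelow

theorem WithTop.nsmul_top {α : Type*} [AddMonoid α] {k : ℕ} (hk : k ≠ 0) :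
    k • (⊤ : WithTop α) = ⊤ := by
  obtain ⟨j, rfl⟩ := Nat.exists_eq_succ_of_ne_zero hk
  rw [succ_nsmul, WithTop.add_top]

theorem neg_natCast_mul_le_mul_iff {p r : ℕ} (hp : 0 < p) {k : ℤ} :
    -((p * r : ℕ) : ℤ) ≤ p * k ↔ -(r : ℤ) ≤ k := by
  rw [Nat.cast_mul, ← mul_neg, mul_le_mul_iff_right₀ (by exact_mod_cast hp)]

theorem neg_natCast_sub_one_le_iff {r : ℕ} (hr : r ≠ 0) {k : ℤ} :
    -((r - 1 : ℕ) : ℤ) ≤ k ↔ -(r : ℤ) < k := by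
  omega

theorem neg_natCast_mul_sub_one_le_mul_iff {p r : ℕ} (hp : 0 < p) (hr : r ≠ 0) {k : ℤ} :
    -((p * r - 1 : ℕ) : ℤ) ≤ p * k ↔ -((r - 1 : ℕ) : ℤ) ≤ k := by
  rw [neg_natCast_sub_one_le_iff (mul_ne_zero hp.ne' hr), neg_natCast_sub_one_le_iff hr,
    Nat.cast_mul, ← mul_neg, mul_lt_mul_iff_right₀ (by exact_mod_cast hp)]

namespace DVField

open scoped Pointwise

variable {L : Type} [Field L] (D : DVField L)

theorem v_zero : D.v 0 = ⊤ := (D.v_top 0).mpr rfl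

theorem v_one : D.v 1 = 0 := by
  have h := D.v_mul 1 1
  rw [mul_one] at h
  lift D.v 1 to ℤ using fun h' => one_ne_zero ((D.v_top 1).mp h') with m
  norm_cast at h ⊢
  omega

theorem v_pow (a : L) (k : ℕ) : D.v (a ^ k) = k • D.v a := by
  induction k with
  | zero => rw [pow_zero, zero_nsmul, v_one]
  | succ k ih => rw [pow_succ, D.v_mul, ih, succ_nsmul]

theorem exists_v_eq_of_v_pow_eq {a : L} {k : ℕ} (hk : k ≠ 0) {m : ℤ} (h : D.v (a ^ k) = m) :
    ∃ m' : ℤ, D.v a = m' ∧ m = k * m' := by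
  rw [v_pow] at h
  lift D.v a to ℤ with m'
  · rintro h'
    rw [h', WithTop.nsmul_top hk] at h
    exact WithTop.top_ne_coe h
  · exact ⟨m', rfl, by exact_mod_cast h.symm⟩

variable {p : ℕ} [hp : Fact p.Prime] {n : ℕ}

theorem filKM_zero : D.filKM p 0 n = D.WO p n := if_pos rfl

theorem mem_filLog_iff {r : ℕ} {x : TruncatedWittVector p n L} :
    x ∈ D.filLog p r n ↔
      ∀ i : Fin n, ∀ m : ℤ, D.v (x.coeff i) = m → -(r : ℤ) ≤ p ^ (n - 1 - (i : ℕ)) * m := by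
  refine forall_congr' fun i => ?_
  induction D.v (x.coeff i) using WithTop.recTopCoe with
  | top => simp [WithTop.nsmul_top (pow_ne_zero _ hp.out.ne_zero)]
  | coe m => rw [← WithTop.coe_nsmul, WithTop.coe_le_coe]; simp

theorem zero_mem_filLog (r : ℕ) : (0 : TruncatedWittVector p n L) ∈ D.filLog p r n := by
  simp [mem_filLog_iff, coeff_zero, v_zero]

theorem filLog_mono {r r' : ℕ} (h : r ≤ r') : D.filLog p r n ⊆ D.filLog p r' n := by
  intro x hx
  rw [mem_filLog_iff] at hx ⊢
  intro i m hm
  linarith [hx i m hm]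

theorem mapsTo_wV_filLog (r : ℕ) : MapsTo wV (D.filLog p r n) (D.filLog p r (n + 1)) := by
  intro x hx
  rw [mem_filLog_iff] at hx ⊢
  intro i m hm
  rw [coeff_wV] at hm
  split_ifs at hm with h
  · simp [v_zero] at hm
  · have := hx _ m hm
    rwa [show n - 1 - (i - 1) = n + 1 - 1 - i by omega] at this

theorem mapsTo_wR_filLog {r r' : ℕ} (h : ∀ k : ℤ, -(r : ℤ) ≤ p * k → -(r' : ℤ) ≤ k) :
    MapsTo wR (D.filLog p r (n + 1)) (D.filLog p r' n) := by
  intro x hx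
  rw [mem_filLog_iff] at hx ⊢
  intro i m hm
  rw [coeff_wR] at hm
  have := hx _ m hm
  rw [Fin.val_castSucc, show n + 1 - 1 - i = n - 1 - i + 1 by omega, pow_succ', mul_assoc] at this
  exact h _ this

theorem mapsTo_wRes_filLog {r r' : ℕ} (h : ∀ k : ℤ, -(r : ℤ) ≤ k → -(r' : ℤ) ≤ p * k) :
    MapsTo wRes (D.filLog p r n) (D.filLog p r' (n + 1)) := by
  intro x hx
  rw [mem_filLog_iff] at hx ⊢
  intro i m hm
  rw [coeff_wRes] at hm
  split_ifs at hm with hi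
  · rw [show n + 1 - 1 - i = n - 1 - i + 1 by omega, pow_succ', mul_assoc]
    exact h _ (hx _ m hm)
  · simp [v_zero] at hm

theorem mapsTo_wFrob_filLog {r r' : ℕ} (h : ∀ k : ℤ, -(r : ℤ) ≤ k → -(r' : ℤ) ≤ p * k) :
    MapsTo wFrob (D.filLog p r n) (D.filLog p r' n) := by
  intro x hx
  rw [mem_filLog_iff] at hx ⊢
  intro i m hm
  rw [coeff_wFrob] at hm
  obtain ⟨m', hm', rfl⟩ := D.exists_v_eq_of_v_pow_eq hp.out.ne_zero hm
  rw [mul_left_comm]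
  exact h _ (hx i m' hm')

theorem image_wVit_filLog {r m : ℕ} (hmn : m ≤ n) :
    wVit '' D.filLog p r m = D.filLog p r n ∩ vanishingBelow (n - m) n := by
  ext x
  constructor
  · rintro ⟨b, hb, rfl⟩
    rw [mem_filLog_iff] at hb
    refine ⟨(D.mem_filLog_iff).2 fun i k hk => ?_, fun i hi => ?_⟩
    · rw [coeff_wVit] at hk
      split_ifs at hk with h
      · have := hb _ k hk
        rwa [show m - 1 - (i - (n - m)) = n - 1 - i by omega] at this
      · simp [v_zero] at hk
    · rw [coeff_wVit, dif_neg (by omega)]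
  · rintro ⟨hx, hv⟩
    rw [mem_filLog_iff] at hx
    refine ⟨TruncatedWittVector.mk p fun j => x.coeff ⟨j + (n - m), by omega⟩,
      (D.mem_filLog_iff).2 fun j k hk => ?_, TruncatedWittVector.ext fun i => ?_⟩
    · rw [coeff_mk] at hk
      have := hx _ k hk
      rwa [show n - 1 - (j + (n - m)) = m - 1 - j by omega] at this
    · rw [coeff_wVit]
      split_ifs with h
      · rw [coeff_mk]
        congr 1
        ext
        simp only
        omega
      · exact (hv i (by omega)).symm

theorem filKM_eq_add {r : ℕ} (hr : r ≠ 0) :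
    D.filKM p r n =
      D.filLog p (r - 1) n + (D.filLog p r n ∩ vanishingBelow (n - padicValNat p r) n) := by
  rw [show n - padicValNat p r = n - min (padicValNat p r) n by omega,
    ← D.image_wVit_filLog (min_le_right _ _), filKM, if_neg hr]
  ext x
  simp only [Set.mem_ofPred_eq, Set.mem_add, Set.exists_mem_image, eq_comm]

theorem zero_mem_filKM (r : ℕ) : (0 : TruncatedWittVector p n L) ∈ D.filKM p r n := by
  rcases eq_or_ne r 0 with rfl | hr
  · simp [filKM_zero, WO, coeff_zero, v_zero]
  · rw [D.filKM_eq_add hr]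
    exact ⟨0, D.zero_mem_filLog _, 0, ⟨D.zero_mem_filLog _, fun i _ => by rw [coeff_zero]⟩,
      add_zero 0⟩

theorem mapsTo_filKM_of_ne_zero {n' r r' : ℕ}
    (φ : TruncatedWittVector p n L →+ TruncatedWittVector p n' L) (hr : r ≠ 0) (hr' : r' ≠ 0)
    (hlog_sub_one : MapsTo φ (D.filLog p (r - 1) n) (D.filLog p (r' - 1) n'))
    (hlog : MapsTo φ (D.filLog p r n) (D.filLog p r' n'))
    (hvanish : MapsTo φ (vanishingBelow (n - padicValNat p r) n)
      (vanishingBelow (n' - padicValNat p r') n')) :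
    MapsTo φ (D.filKM p r n) (D.filKM p r' n') := by
  rw [D.filKM_eq_add hr, D.filKM_eq_add hr']
  rintro _ ⟨a, ha, b, ⟨hb, hb'⟩, rfl⟩
  exact ⟨φ a, hlog_sub_one ha, φ b, ⟨hlog hb, hvanish hb'⟩, (map_add φ a b).symm⟩

theorem filKM_subset_filKM_mul (r : ℕ) : D.filKM p r n ⊆ D.filKM p (p * r) n := by
  rcases eq_or_ne r 0 with rfl | hr
  · rw [mul_zero]
  have hr_le := Nat.le_mul_of_pos_left r hp.out.pos
  refine D.mapsTo_filKM_of_ne_zero (AddMonoidHom.id _) hr (mul_ne_zero hp.out.ne_zero hr)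
    (D.filLog_mono (Nat.sub_le_sub_right hr_le 1)) (D.filLog_mono hr_le) ?_
  exact vanishingBelow_anti (by rw [padicValNat_base_mul hp.out.one_lt hr]; omega)

theorem mapsTo_wV_filKM (r : ℕ) : MapsTo wV (D.filKM p r n) (D.filKM p r (n + 1)) := by
  rcases eq_or_ne r 0 with rfl | hr
  · rw [filKM_zero, filKM_zero]
    intro x hx i
    rw [coeff_wV]
    split_ifs
    · simp [v_zero]
    · exact hx _
  refine D.mapsTo_filKM_of_ne_zero wVHom hr hr (D.mapsTo_wV_filLog _) (D.mapsTo_wV_filLog _) ?_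
  exact (mapsTo_wV_vanishingBelow _).mono_right (vanishingBelow_anti (by omega))

theorem mapsTo_wR_filKM (r : ℕ) : MapsTo wR (D.filKM p (p * r) (n + 1)) (D.filKM p r n) := by
  rcases eq_or_ne r 0 with rfl | hr
  · rw [mul_zero, filKM_zero, filKM_zero]
    exact fun x hx i => hx _
  have hp0 := hp.out.pos
  refine D.mapsTo_filKM_of_ne_zero wRHom (mul_ne_zero hp0.ne' hr) hr
    (D.mapsTo_wR_filLog fun _ => (neg_natCast_mul_sub_one_le_mul_iff hp0 hr).1)
    (D.mapsTo_wR_filLog fun _ => (neg_natCast_mul_le_mul_iff hp0).1) ?_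
  rw [padicValNat_base_mul hp.out.one_lt hr,
    show n + 1 - (padicValNat p r + 1) = n - padicValNat p r by omega]
  exact mapsTo_wR_vanishingBelow _

theorem mapsTo_wFrob_filKM [CharP L p] (r : ℕ) :
    MapsTo wFrob (D.filKM p r n) (D.filKM p (p * r) n) := by
  rcases eq_or_ne r 0 with rfl | hr
  · rw [mul_zero, filKM_zero]
    intro x hx i
    rw [coeff_wFrob, v_pow]
    exact nsmul_nonneg (hx i) p
  have hp0 := hp.out.pos
  refine D.mapsTo_filKM_of_ne_zero wFrobHom hr (mul_ne_zero hp0.ne' hr)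
    (D.mapsTo_wFrob_filLog fun _ => (neg_natCast_mul_sub_one_le_mul_iff hp0 hr).2)
    (D.mapsTo_wFrob_filLog fun _ => (neg_natCast_mul_le_mul_iff hp0).2) ?_
  refine (mapsTo_wFrob_vanishingBelow _).mono_right (vanishingBelow_anti ?_)
  rw [padicValNat_base_mul hp.out.one_lt hr]
  omega

theorem exists_wR_eq_of_mem_filKM {r : ℕ} {x : TruncatedWittVector p n L}
    (hx : x ∈ D.filKM p r n) : ∃ y ∈ D.filKM p (p * r) (n + 1), wR y = x := by
  rcases eq_or_ne r 0 with rfl | hr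
  · rw [filKM_zero] at hx
    refine ⟨wRes x, fun i => ?_, wR_wRes x⟩
    rw [coeff_wRes]
    split_ifs
    · exact hx _
    · simp [v_zero]
  have hp0 := hp.out.pos
  rw [D.filKM_eq_add hr] at hx
  obtain ⟨a, ha, b, ⟨hb, hb'⟩, rfl⟩ := hx
  refine ⟨wRes a + wRes b, ?_, by rw [← wRHom_apply, map_add]; simp [wRHom_apply, wR_wRes]⟩
  rw [D.filKM_eq_add (mul_ne_zero hp0.ne' hr)]
  refine ⟨wRes a, D.mapsTo_wRes_filLog (fun _ => (neg_natCast_mul_sub_one_le_mul_iff hp0 hr).2) ha,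
    wRes b, ⟨D.mapsTo_wRes_filLog (fun _ => (neg_natCast_mul_le_mul_iff hp0).2) hb, ?_⟩, rfl⟩
  rw [padicValNat_base_mul hp.out.one_lt hr,
    show n + 1 - (padicValNat p r + 1) = n - padicValNat p r by omega]
  exact mapsTo_wRes_vanishingBelow _ hb'

variable [CharP L p]

theorem mem_FilP_iff {r N : ℕ} (hN : n ≤ N) {x : TruncatedWittVector p n L} :
    x ∈ D.FilP p r n ↔ ∃ f : ℕ → TruncatedWittVector p n L,
      (∀ s, f s ∈ D.filKM p (r * p ^ s) n) ∧ x = ∑ s ∈ Finset.range N, p ^ s • f s := by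
  simp only [sum_range_pow_nsmul_eq hN]
  constructor
  · rintro ⟨g, hg, rfl⟩
    refine ⟨fun s => if h : s < n then g ⟨s, h⟩ else 0, fun s => ?_, ?_⟩
    · dsimp only
      split_ifs with h
      · exact hg ⟨s, h⟩
      · exact D.zero_mem_filKM _
    · rw [← Fin.sum_univ_eq_sum_range]
      simp
  · rintro ⟨f, hf, rfl⟩
    exact ⟨fun s => f s, fun s => hf s, (Fin.sum_univ_eq_sum_range (fun s => p ^ s • f s) n).symm⟩

theorem mapsTo_FilP {n' r r' : ℕ} (φ : TruncatedWittVector p n L →+ TruncatedWittVector p n' L)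
    (hφ : ∀ s, MapsTo φ (D.filKM p (r * p ^ s) n) (D.filKM p (r' * p ^ s) n')) :
    MapsTo φ (D.FilP p r n) (D.FilP p r' n') := by
  intro x hx
  obtain ⟨f, hf, rfl⟩ := (D.mem_FilP_iff (N := n + n') (by omega)).1 hx
  refine (D.mem_FilP_iff (N := n + n') (by omega)).2 ⟨fun s => φ (f s), fun s => hφ s (hf s), ?_⟩
  simp only [map_sum, map_nsmul]

theorem mapsTo_wV_FilP (r : ℕ) : MapsTo wV (D.FilP p r n) (D.FilP p r (n + 1)) :=
  D.mapsTo_FilP wVHom fun _ => D.mapsTo_wV_filKM _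

theorem mapsTo_wR_FilP (r : ℕ) : MapsTo wR (D.FilP p r (n + 1)) (D.FilP p r n) :=
  D.mapsTo_FilP wRHom fun _ => (D.mapsTo_wR_filKM _).mono_left (D.filKM_subset_filKM_mul _)

theorem mapsTo_wR_FilP_mul (r : ℕ) : MapsTo wR (D.FilP p (p * r) (n + 1)) (D.FilP p r n) :=
  D.mapsTo_FilP wRHom fun _ => by rw [mul_assoc]; exact D.mapsTo_wR_filKM _

theorem mapsTo_wF_FilP (r : ℕ) : MapsTo wF (D.FilP p r (n + 1)) (D.FilP p r n) :=
  D.mapsTo_FilP (wRHom.comp wFrobHom) fun _ =>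
    (D.mapsTo_wR_filKM _).comp (D.mapsTo_wFrob_filKM _)

theorem exists_wR_eq_of_mem_FilP {r : ℕ} {x : TruncatedWittVector p n L}
    (hx : x ∈ D.FilP p r n) : ∃ w ∈ D.FilP p (p * r) (n + 1), wR w = x := by
  obtain ⟨f, hf, rfl⟩ := (D.mem_FilP_iff le_rfl).1 hx
  choose y hy hyf using fun s => D.exists_wR_eq_of_mem_filKM (hf s)
  refine ⟨∑ s ∈ Finset.range (n + 1), p ^ s • y s,
    (D.mem_FilP_iff le_rfl).2 ⟨y, fun s => by rw [mul_assoc]; exact hy s, rfl⟩, ?_⟩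
  rw [← wRHom_apply, map_sum]
  simp only [map_nsmul, wRHom_apply, hyf]
  exact sum_range_pow_nsmul_eq n.le_succ f

theorem nsmul_mem_FilP {r N : ℕ} {w : TruncatedWittVector p N L}
    (hw : w ∈ D.FilP p (p * r) N) : p • w ∈ D.FilP p r N := by
  obtain ⟨g, hg, rfl⟩ := (D.mem_FilP_iff le_rfl).1 hw
  refine (D.mem_FilP_iff N.le_succ).2 ⟨fun t => if t = 0 then 0 else g (t - 1), fun t => ?_, ?_⟩
  · rcases t with _ | t
    · exact D.zero_mem_filKM _
    · simp only [Nat.add_one_ne_zero, if_false, add_tsub_cancel_right]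
      convert hg t using 2
      ring
  · rw [Finset.sum_range_succ', Finset.smul_sum]
    simp only [Nat.add_one_ne_zero, if_false, if_true, add_tsub_cancel_right, smul_zero, add_zero,
      pow_succ', smul_smul]

end DVField

theorem statement5_general (p : ℕ) [Fact p.Prime] (L : Type) [Field L] [CharP L p]
    (D : DVField L) (r n : ℕ) :
    (∀ x ∈ D.FilP p r n, wV x ∈ D.FilP p r (n + 1)) ∧
    (∀ x ∈ D.FilP p r (n + 1), wF x ∈ D.FilP p r n) ∧
    (∀ x ∈ D.FilP p r (n + 1), wR x ∈ D.FilP p r n) ∧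
    (∀ x ∈ D.FilP p r n, wP x ∈ D.FilP p r (n + 1)) ∧
    wP '' D.FilP p r n =
      (fun w : TruncatedWittVector p (n + 1) L => p • w) '' D.FilP p (p * r) (n + 1) := by
  have himage : wP '' D.FilP p r n =
      (fun w : TruncatedWittVector p (n + 1) L => p • w) '' D.FilP p (p * r) (n + 1) := by
    ext y
    constructor
    · rintro ⟨x, hx, rfl⟩
      obtain ⟨w, hw, hwx⟩ := D.exists_wR_eq_of_mem_FilP hx
      exact ⟨w, hw, (wP_eq_nsmul_of_wR_eq hwx).symm⟩
    · rintro ⟨w, hw, rfl⟩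
      exact ⟨wR w, D.mapsTo_wR_FilP_mul r hw, wP_eq_nsmul_of_wR_eq rfl⟩
  refine ⟨fun x hx => D.mapsTo_wV_FilP r hx, fun x hx => D.mapsTo_wF_FilP r hx,
    fun x hx => D.mapsTo_wR_FilP r hx, fun x hx => ?_, himage⟩
  obtain ⟨w, hw, hwx⟩ := himage.subset (mem_image_of_mem wP hx)
  rw [← hwx]
  exact D.nsmul_mem_FilP hw

/-- (Weight-zero compatibility of the `p`-saturated filtration with the
Witt-vector operations.)  For all `r ≥ 0` and `n ≥ 1`: `V`, `F`, `R`, `p̲` preserve `Fil^p_r`,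
and moreover `p̲(Fil^p_r Wₙ(L)) = p · Fil^p_{pr} W_{n+1}(L)`. -/
theorem statement5 (p : ℕ) [Fact p.Prime] (L : Type) [Field L] [CharP L p]
    (D : DVField L) (r n : ℕ) (hn : 1 ≤ n) :
    (∀ x ∈ D.FilP p r n, wV x ∈ D.FilP p r (n + 1)) ∧
    (∀ x ∈ D.FilP p r (n + 1), wF x ∈ D.FilP p r n) ∧
    (∀ x ∈ D.FilP p r (n + 1), wR x ∈ D.FilP p r n) ∧
    (∀ x ∈ D.FilP p r n, wP x ∈ D.FilP p r (n + 1)) ∧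
    wP '' D.FilP p r n =
      (fun w : TruncatedWittVector p (n + 1) L => p • w) '' D.FilP p (p * r) (n + 1) :=
  statement5_general p L D r n
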